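/- arXiv:1403.2807 — 2 statements merged into one kernel-verified Lean document; each statement's English description precedes it below -/
import Mathlib

section
/- Let (V,ℬ) be a PBD(v,K,1) with v ≥ 2 and 2 ≤ K_min, and let Φ be the n×N matrix of Construction con1. Then Φ is ε-equiangular with ε = (K_max−K_min)/(K_min−1). -/
open scoped BigOperators

noncomputable def welch (n N : ℕ) : ℝ :=
  Real.sqrt (((N : ℝ) - n) / (((N : ℝ) - 1) * n))

/-- Normalised absolute inner product of columns `i` and `j` of `Φ`. -/
noncomputable def colCoh {m ι : Type*} [Fintype m] (Φ : Matrix m ι ℂ) (i j : ι) : ℝ :=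
  ‖∑ r, (starRingEnd ℂ) (Φ r i) * Φ r j‖ /
    (Real.sqrt (∑ r, ‖Φ r i‖ ^ 2) * Real.sqrt (∑ r, ‖Φ r j‖ ^ 2))

/-- `(ℓ₁,t)`-recoverability: every `t`-sparse `x` is the unique `ℓ₁`-minimizer among
solutions `z` of `Φ z = Φ x`. -/
def Recoverable {m ι : Type*} [Fintype m] [Fintype ι] [DecidableEq ι]
    (Φ : Matrix m ι ℂ) (t : ℕ) : Prop :=
  ∀ x : ι → ℂ, (Finset.univ.filter (fun i => x i ≠ 0)).card ≤ t →
    ∀ z : ι → ℂ, Φ.mulVec z = Φ.mulVec x → z ≠ x →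
      ∑ i, ‖x i‖ < ∑ i, ‖z i‖
/-- `B` is the block set of a pairwise balanced design with index `λ = 1` and block
sizes in `K`. -/
def IsPBD {V : Type*} [DecidableEq V] (B : Finset (Finset V)) (K : Finset ℕ) : Prop :=
  (∀ b ∈ B, b.card ∈ K) ∧
  ∀ x y : V, x ≠ y → ∃! b : Finset V, b ∈ B ∧ x ∈ b ∧ y ∈ b

/-- The replication number of the point `x`: the number of blocks containing `x`. -/
def repl {V : Type*} [DecidableEq V] (B : Finset (Finset V)) (x : V) : ℕ :=
  (B.filter (fun b => x ∈ b)).card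

/-- A complex Hadamard matrix of order `r`. -/
def IsComplexHadamard {r : ℕ} (H : Matrix (Fin r) (Fin r) ℂ) : Prop :=
  (∀ i j, ‖H i j‖ = 1) ∧ H * H.conjTranspose = (r : ℂ) • 1

/-- Construction con1: rows indexed by blocks, columns indexed by pairs `(x,j)` with
`x ∈ V` and `j < r_x + 1`; the entry in row `B` and column `(x,j)` is
`(1/√(r_x+1))·(H_x)_{σ_x(B), j}` if `x ∈ B` and `0` otherwise, where `σ_x` picks out
distinct non-initial rows of `H_x`. -/
noncomputable def con1 {V : Type*} [DecidableEq V] (B : Finset (Finset V))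
    (H : ∀ x : V, Matrix (Fin (repl B x + 1)) (Fin (repl B x + 1)) ℂ)
    (σ : ∀ x : V, {b : Finset V // b ∈ B ∧ x ∈ b} → Fin (repl B x + 1)) :
    Matrix {b : Finset V // b ∈ B} (Σ x : V, Fin (repl B x + 1)) ℂ :=
  fun b c =>
    if h : c.1 ∈ b.1 then
      ((Real.sqrt (repl B c.1 + 1))⁻¹ : ℝ) * H c.1 (σ c.1 ⟨b.1, b.2, h⟩) c.2
    else 0

/-!
Every column of `con1` has squared norm `r_x / (r_x + 1)`. Columns at distinct points `x ≠ y`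
share only the unique block through `x` and `y`; columns at the same point `x` are orthogonal
over all rows of `H_x`, and `σ_x` hits every row except the initial one, so their inner product
is minus the initial-row term. Either way the coherence is `1 / √(r_x r_y)`.

Counting the other points on the blocks through `x` gives
`(K_min - 1) r_x ≤ v - 1 ≤ (K_max - 1) r_x`, and counting ordered pairs of points,
`∑_B |B| (|B| - 1) = v (v - 1)`, places the Welch bound in the same interval
`[(K_min - 1)/(v - 1), (K_max - 1)/(v - 1)]`. Any two numbers of an interval `[α, β]` with
`α > 0` agree up to the factor `1 ± (β - α)/α`.
-/

open Finset
open scoped Matrix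

section Design

variable {V : Type*} [Fintype V] [DecidableEq V] {B : Finset (Finset V)}

lemma sum_repl : ∑ x, repl B x = ∑ b ∈ B, b.card := by
  simp only [repl, card_filter]
  rw [sum_comm]
  simp

lemma card_subtype_mem_and_mem (x : V) :
    Fintype.card {b // b ∈ B ∧ x ∈ b} = repl B x :=
  Fintype.card_of_subtype _ fun _ => mem_filter

variable {K : Finset ℕ}

lemma IsPBD.sum_card_sub_one (hB : IsPBD B K) (x : V) :
    ∑ b ∈ B with x ∈ b, ((b.card : ℝ) - 1) = Fintype.card V - 1 := by
  have hdisj : ((B.filter (x ∈ ·) : Finset _) : Set (Finset V)).PairwiseDisjoint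
      (·.erase x) := by
    intro b₁ hb₁ b₂ hb₂ hne
    simp only [coe_filter, Set.mem_ofPred_eq] at hb₁ hb₂
    refine disjoint_left.2 fun y hy₁ hy₂ => hne ?_
    rw [mem_erase] at hy₁ hy₂
    exact (hB.2 x y hy₁.1.symm).unique ⟨hb₁.1, hb₁.2, hy₁.2⟩ ⟨hb₂.1, hb₂.2, hy₂.2⟩
  have hcover : (B.filter (x ∈ ·)).biUnion (·.erase x) = univ.erase x := by
    ext y
    simp only [mem_biUnion, mem_filter, mem_erase, mem_univ, and_true]
    refine ⟨fun ⟨_, _, hy, _⟩ => hy, fun hy => ?_⟩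
    obtain ⟨b, ⟨hb, hxb, hyb⟩, -⟩ := hB.2 x y (Ne.symm hy)
    exact ⟨b, ⟨hb, hxb⟩, hy, hyb⟩
  have hcard := congrArg (fun s : Finset V => (s.card : ℝ)) hcover
  simp only [card_biUnion hdisj, Nat.cast_sum, cast_card_erase_of_mem (mem_univ x),
    card_univ] at hcard
  rw [← hcard]
  refine sum_congr rfl fun b hb => ?_
  rw [cast_card_erase_of_mem (mem_filter.1 hb).2]

lemma IsPBD.sum_card_mul_card_sub_one (hB : IsPBD B K) :
    ∑ b ∈ B, (b.card : ℝ) * (b.card - 1) = Fintype.card V * (Fintype.card V - 1) := by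
  calc ∑ b ∈ B, (b.card : ℝ) * (b.card - 1)
      = ∑ b ∈ B, ∑ x, if x ∈ b then (b.card : ℝ) - 1 else 0 := by
        refine sum_congr rfl fun b _ => ?_
        rw [sum_ite_mem, univ_inter, sum_const, nsmul_eq_mul]
    _ = ∑ x, ∑ b ∈ B with x ∈ b, ((b.card : ℝ) - 1) := by
        rw [sum_comm]; simp only [sum_filter]
    _ = _ := by simp only [hB.sum_card_sub_one, sum_const, card_univ, nsmul_eq_mul]

end Design

section WelchBound

variable {n N : ℕ} {v T k : ℝ}

lemma welch_eq_of_cast_eq (hN : (N : ℝ) = v + T + n) :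
    welch n N = √((v + T) / ((v + T + n - 1) * n)) := by
  rw [welch, hN, add_sub_cancel_right]

lemma sub_one_div_le_welch (hk : 1 < k) (hv : 1 < v) (hn : 0 < n) (hN : (N : ℝ) = v + T + n)
    (hT : (k - 1) * n ≤ T) (hpairs : k * T ≤ v * (v - 1)) :
    (k - 1) / (v - 1) ≤ welch n N := by
  have hn' : (0 : ℝ) < n := by exact_mod_cast hn
  have hT0 : 0 ≤ T := le_trans (by positivity) hT
  rw [welch_eq_of_cast_eq hN, Real.le_sqrt (div_nonneg (by linarith) (by linarith))
    (div_nonneg (by linarith) (by nlinarith)), div_pow,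
    div_le_div_iff₀ (by positivity) (by nlinarith)]
  -- with `a = k - 1`: `a n ≤ T` bounds the left side by `a T (v - 1 + T) + T²`,
  -- and `(a + 1) T ≤ v (v - 1)` bounds that by `(v + T) (v - 1)²`
  nlinarith [mul_nonneg (sub_nonneg.2 hT) (by nlinarith : 0 ≤ (k - 1) * (v - 1 + T + n) + T),
    mul_nonneg (sub_nonneg.2 hpairs) hT0,
    mul_nonneg (sub_nonneg.2 hpairs) (by linarith : 0 ≤ v - 1)]

lemma welch_le_sub_one_div (hk : 1 < k) (hv : 1 < v) (hN : (N : ℝ) = v + T + n)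
    (hT : T ≤ (k - 1) * n) (hpairs : v * (v - 1) ≤ k * T) :
    welch n N ≤ (k - 1) / (v - 1) := by
  have hT0 : 0 ≤ T := by nlinarith
  have hn : (0 : ℝ) ≤ n := by nlinarith
  rw [welch_eq_of_cast_eq hN, Real.sqrt_le_iff, div_pow]
  refine ⟨div_nonneg (by linarith) (by linarith), ?_⟩
  rcases hn.eq_or_lt with hn0 | hn0
  · rw [← hn0, mul_zero, div_zero]; positivity
  rw [div_le_div_iff₀ (mul_pos (by linarith) hn0) (by positivity)]
  nlinarith [mul_nonneg (sub_nonneg.2 hT) (by nlinarith : 0 ≤ (k - 1) * (v - 1 + T + n) + T),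
    mul_nonneg (sub_nonneg.2 hpairs) hT0,
    mul_nonneg (sub_nonneg.2 hpairs) (by linarith : 0 ≤ v - 1)]

end WelchBound

lemma IsComplexHadamard.conjTranspose_mul_self {r : ℕ} {H : Matrix (Fin r) (Fin r) ℂ}
    (hH : IsComplexHadamard H) : Hᴴ * H = (r : ℂ) • 1 := by
  rcases Nat.eq_zero_or_pos r with rfl | hr
  · exact Subsingleton.elim _ _
  have hr' : (r : ℂ) ≠ 0 := by exact_mod_cast hr.ne'
  have hinv : H * ((r : ℂ)⁻¹ • Hᴴ) = 1 := by
    rw [Matrix.mul_smul, hH.2, smul_smul, inv_mul_cancel₀ hr', one_smul]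
  rw [← mul_eq_one_comm.1 hinv, Matrix.smul_mul, smul_smul, mul_inv_cancel₀ hr', one_smul]

lemma IsComplexHadamard.sum_conj_mul_eq_zero {r : ℕ} {H : Matrix (Fin r) (Fin r) ℂ}
    (hH : IsComplexHadamard H) {j l : Fin r} (hjl : j ≠ l) :
    ∑ i, starRingEnd ℂ (H i j) * H i l = 0 := by
  simpa [Matrix.mul_apply, Matrix.one_apply_ne hjl] using
    congrFun (congrFun hH.conjTranspose_mul_self j) l

lemma sum_comp_eq_sum_succ {α M : Type*} [Fintype α] [AddCommMonoid M] {r : ℕ}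
    (e : α → Fin (r + 1)) (he : Function.Injective e) (he0 : ∀ a, e a ≠ 0)
    (hcard : Fintype.card α = r) (f : Fin (r + 1) → M) :
    ∑ a, f (e a) = ∑ i : Fin r, f i.succ := by
  let e' : α → Fin r := fun a => (e a).pred (he0 a)
  have he' : Function.Bijective e' :=
    (Fintype.bijective_iff_injective_and_card e').2
      ⟨fun a b hab => he (Fin.pred_inj.1 hab), by simp [hcard]⟩
  exact Fintype.sum_bijective e' he' _ _ fun a => by simp [e']

section Con1

variable {V : Type*} [Fintype V] [DecidableEq V] {B : Finset (Finset V)}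

lemma sum_dite_mem {M : Type*} [AddCommMonoid M] (x : V) (g : {b // b ∈ B ∧ x ∈ b} → M) :
    ∑ b : {b // b ∈ B}, (if h : x ∈ b.1 then g ⟨b.1, b.2, h⟩ else 0) = ∑ p, g p := by
  rw [← Fintype.sum_subtype_add_sum_subtype (fun b : {b // b ∈ B} => x ∈ b.1),
    Fintype.sum_eq_zero (α := {a : {b // b ∈ B} // x ∉ a.1}) _ fun a => dif_neg a.2, add_zero]
  exact Fintype.sum_equiv (Equiv.subtypeSubtypeEquivSubtypeInter (· ∈ B) (x ∈ ·)) _ _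
    fun a => dif_pos a.2

variable {H : ∀ x : V, Matrix (Fin (repl B x + 1)) (Fin (repl B x + 1)) ℂ}
  {σ : ∀ x : V, {b : Finset V // b ∈ B ∧ x ∈ b} → Fin (repl B x + 1)}

omit [Fintype V] in
lemma con1_apply_of_mem {b : {b // b ∈ B}} {x : V} (h : x ∈ b.1) (m : Fin (repl B x + 1)) :
    con1 B H σ b ⟨x, m⟩ = ((√(repl B x + 1))⁻¹ : ℝ) * H x (σ x ⟨b.1, b.2, h⟩) m :=
  dif_pos h

omit [Fintype V] in
lemma con1_apply_of_not_mem {b : {b // b ∈ B}} {x : V} (h : x ∉ b.1) (m : Fin (repl B x + 1)) :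
    con1 B H σ b ⟨x, m⟩ = 0 :=
  dif_neg h

lemma sum_norm_con1_sq (hH : ∀ x, IsComplexHadamard (H x)) (x : V) (m : Fin (repl B x + 1)) :
    ∑ b, ‖con1 B H σ b ⟨x, m⟩‖ ^ 2 = repl B x / (repl B x + 1) := by
  have hterm : ∀ b : {b // b ∈ B}, ‖con1 B H σ b ⟨x, m⟩‖ ^ 2
      = if x ∈ b.1 then ((repl B x : ℝ) + 1)⁻¹ else 0 := by
    intro b
    by_cases h : x ∈ b.1
    · rw [if_pos h, con1_apply_of_mem h, norm_mul, (hH x).1, mul_one, Complex.norm_real,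
        norm_inv, Real.norm_of_nonneg (Real.sqrt_nonneg _), inv_pow, Real.sq_sqrt (by positivity)]
    · rw [if_neg h, con1_apply_of_not_mem h, norm_zero, sq, mul_zero]
  rw [sum_congr rfl fun b _ => hterm b]
  refine (sum_dite_mem x fun _ => ((repl B x : ℝ) + 1)⁻¹).trans ?_
  rw [sum_const, card_univ, card_subtype_mem_and_mem, nsmul_eq_mul, div_eq_mul_inv]

lemma norm_inner_con1_self (hH : ∀ x, IsComplexHadamard (H x))
    (hσinj : ∀ x, Function.Injective (σ x)) (hσ0 : ∀ x b, σ x b ≠ 0)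
    {x : V} {j l : Fin (repl B x + 1)} (hjl : j ≠ l) :
    ‖∑ b, starRingEnd ℂ (con1 B H σ b ⟨x, j⟩) * con1 B H σ b ⟨x, l⟩‖
      = ((repl B x : ℝ) + 1)⁻¹ := by
  set c : ℝ := (√(repl B x + 1))⁻¹ with hc
  set f : Fin (repl B x + 1) → ℂ := fun i => starRingEnd ℂ (H x i j) * H x i l with hf
  have hterm : ∀ b : {b // b ∈ B},
      starRingEnd ℂ (con1 B H σ b ⟨x, j⟩) * con1 B H σ b ⟨x, l⟩
        = if h : x ∈ b.1 then (c : ℂ) ^ 2 * f (σ x ⟨b.1, b.2, h⟩) else 0 := by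
    intro b
    by_cases h : x ∈ b.1
    · rw [dif_pos h, con1_apply_of_mem h, con1_apply_of_mem h, map_mul, Complex.conj_ofReal]
      ring
    · rw [dif_neg h, con1_apply_of_not_mem h, map_zero, zero_mul]
  have hrows : ∑ i : Fin (repl B x), f i.succ = -f 0 := by
    have horth := (hH x).sum_conj_mul_eq_zero hjl
    rw [Fin.sum_univ_succ] at horth
    exact eq_neg_of_add_eq_zero_right horth
  rw [sum_congr rfl fun b _ => hterm b, sum_dite_mem x fun p => (c : ℂ) ^ 2 * f (σ x p),
    ← mul_sum, sum_comp_eq_sum_succ (σ x) (hσinj x) (hσ0 x) (card_subtype_mem_and_mem x) f,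
    hrows, norm_mul, norm_neg, hf, norm_mul, RCLike.norm_conj, (hH x).1, (hH x).1, norm_pow,
    Complex.norm_real, Real.norm_of_nonneg (by positivity), hc, inv_pow,
    Real.sq_sqrt (by positivity), mul_one, mul_one]

omit [Fintype V] in
lemma norm_inner_con1_of_ne {K : Finset ℕ} (hB : IsPBD B K) (hH : ∀ x, IsComplexHadamard (H x))
    {x y : V} (hxy : x ≠ y) (j : Fin (repl B x + 1)) (l : Fin (repl B y + 1)) :
    ‖∑ b, starRingEnd ℂ (con1 B H σ b ⟨x, j⟩) * con1 B H σ b ⟨y, l⟩‖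
      = (√(repl B x + 1))⁻¹ * (√(repl B y + 1))⁻¹ := by
  obtain ⟨b₀, ⟨hb₀, hxb₀, hyb₀⟩, huniq⟩ := hB.2 x y hxy
  rw [sum_eq_single_of_mem ⟨b₀, hb₀⟩ (mem_univ _) fun b _ hb => ?_]
  · rw [con1_apply_of_mem (b := ⟨b₀, hb₀⟩) hxb₀, con1_apply_of_mem (b := ⟨b₀, hb₀⟩) hyb₀]
    simp [(hH x).1, (hH y).1, abs_of_nonneg, Real.sqrt_nonneg]
  · by_cases hx : x ∈ b.1
    · rw [con1_apply_of_not_mem fun hy => hb (Subtype.ext (huniq b.1 ⟨b.2, hx, hy⟩)), mul_zero]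
    · rw [con1_apply_of_not_mem hx, map_zero, zero_mul]

lemma colCoh_con1 {K : Finset ℕ} (hB : IsPBD B K) (hH : ∀ x, IsComplexHadamard (H x))
    (hσinj : ∀ x, Function.Injective (σ x)) (hσ0 : ∀ x b, σ x b ≠ 0)
    {i j : Σ x : V, Fin (repl B x + 1)} (hij : i ≠ j) :
    colCoh (con1 B H σ) i j = √((repl B i.1 : ℝ)⁻¹ * (repl B j.1 : ℝ)⁻¹) := by
  obtain ⟨x, m⟩ := i
  obtain ⟨y, m'⟩ := j
  have hinner : ‖∑ b, starRingEnd ℂ (con1 B H σ b ⟨x, m⟩) * con1 B H σ b ⟨y, m'⟩‖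
      = (√(repl B x + 1))⁻¹ * (√(repl B y + 1))⁻¹ := by
    by_cases hxy : x = y
    · subst hxy
      rw [norm_inner_con1_self hH hσinj hσ0 fun h => hij (by rw [h]), ← mul_inv,
        Real.mul_self_sqrt (by positivity)]
    · exact norm_inner_con1_of_ne hB hH hxy m m'
  have hA : √((repl B x : ℝ) + 1) * √((repl B y : ℝ) + 1) ≠ 0 := by positivity
  rw [colCoh, hinner, sum_norm_con1_sq hH, sum_norm_con1_sq hH,
    Real.sqrt_div (Nat.cast_nonneg _), Real.sqrt_div (Nat.cast_nonneg _), div_mul_div_comm,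
    ← mul_inv, div_div_eq_mul_div, inv_mul_cancel₀ hA, one_div, Real.sqrt_mul (by positivity),
    Real.sqrt_inv, Real.sqrt_inv, mul_inv]

end Con1

section Bounds

lemma sqrt_mul_mem_Icc {α β s t : ℝ} (hα : 0 ≤ α) (hs : s ∈ Set.Icc α β)
    (ht : t ∈ Set.Icc α β) : √(s * t) ∈ Set.Icc α β := by
  have hβ : 0 ≤ β := hα.trans (hs.1.trans hs.2)
  constructor
  · calc α = √(α * α) := (Real.sqrt_mul_self hα).symm
      _ ≤ √(s * t) := Real.sqrt_le_sqrt (mul_le_mul hs.1 ht.1 hα (hα.trans hs.1))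
  · calc √(s * t) ≤ √(β * β) :=
          Real.sqrt_le_sqrt (mul_le_mul hs.2 ht.2 (hα.trans ht.1) hβ)
      _ = β := Real.sqrt_mul_self hβ

lemma one_sub_mul_le_and_le_one_add_mul_of_mem_Icc {α β c μ : ℝ} (hα : 0 < α)
    (hc : c ∈ Set.Icc α β) (hμ : μ ∈ Set.Icc α β) :
    (1 - (β - α) / α) * μ ≤ c ∧ c ≤ (1 + (β - α) / α) * μ := by
  have hlow : 1 - (β - α) / α = (2 * α - β) / α := by field_simp; ring
  have hhigh : 1 + (β - α) / α = β / α := by field_simp; ring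
  rw [hlow, hhigh, div_mul_eq_mul_div, div_mul_eq_mul_div, div_le_iff₀ hα, le_div_iff₀ hα]
  constructor
  · rcases le_total (2 * α - β) 0 with h | h
    · nlinarith [hc.1, hμ.1]
    · -- `(2α - β) β ≤ α²` is `(α - β)² ≥ 0`
      nlinarith [mul_le_mul_of_nonneg_left hμ.2 h, sq_nonneg (α - β), hc.1]
  · nlinarith [mul_le_mul hc.2 hμ.1 hα.le (hα.le.trans (hc.1.trans hc.2))]

end Bounds

section DesignBounds

variable {V : Type*} [Fintype V] [DecidableEq V] {B : Finset (Finset V)} {K : Finset ℕ}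
  {k k' : ℝ}

lemma IsPBD.inv_repl_mem_Icc (hB : IsPBD B K) (hk : ∀ b ∈ B, k ≤ b.card)
    (hk' : ∀ b ∈ B, (b.card : ℝ) ≤ k') (hv : 1 < Fintype.card V) (x : V) :
    (repl B x : ℝ)⁻¹ ∈
      Set.Icc ((k - 1) / (Fintype.card V - 1)) ((k' - 1) / (Fintype.card V - 1)) := by
  have hv' : (0 : ℝ) < Fintype.card V - 1 := by
    rw [sub_pos]; exact_mod_cast hv
  have hlow : repl B x • (k - 1) ≤ (Fintype.card V : ℝ) - 1 :=
    hB.sum_card_sub_one x ▸ card_nsmul_le_sum _ _ _ fun b hb =>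
      sub_le_sub_right (hk b (mem_filter.1 hb).1) 1
  have hhigh : (Fintype.card V : ℝ) - 1 ≤ repl B x • (k' - 1) :=
    hB.sum_card_sub_one x ▸ sum_le_card_nsmul _ _ _ fun b hb =>
      sub_le_sub_right (hk' b (mem_filter.1 hb).1) 1
  rw [nsmul_eq_mul] at hlow hhigh
  have hr : (0 : ℝ) < repl B x :=
    (Nat.cast_nonneg _).lt_of_ne fun h => by rw [← h, zero_mul] at hhigh; linarith
  constructor
  · rw [div_le_iff₀ hv', inv_mul_eq_div, le_div_iff₀ hr]; linarith
  · rw [le_div_iff₀ hv', inv_mul_eq_div, div_le_iff₀ hr]; linarith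

lemma IsPBD.card_pos (hB : IsPBD B K) (hv : 1 < Fintype.card V) : 0 < B.card := by
  obtain ⟨x, y, hxy⟩ := Fintype.exists_pair_of_one_lt_card hv
  obtain ⟨b, hb, -⟩ := hB.2 x y hxy
  exact Finset.card_pos.2 ⟨b, hb.1⟩

lemma cast_sum_repl_add_one :
    ((∑ x, (repl B x + 1) : ℕ) : ℝ)
      = Fintype.card V + ∑ b ∈ B, ((b.card : ℝ) - 1) + B.card := by
  rw [sum_add_distrib, sum_repl, sum_sub_distrib]
  push_cast
  simp only [sum_const, card_univ, nsmul_eq_mul, mul_one]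
  ring

lemma IsPBD.welch_mem_Icc (hB : IsPBD B K) (hk : ∀ b ∈ B, k ≤ b.card)
    (hk' : ∀ b ∈ B, (b.card : ℝ) ≤ k') (hk1 : 1 < k) (hv : 1 < Fintype.card V) :
    welch B.card (∑ x, (repl B x + 1)) ∈
      Set.Icc ((k - 1) / (Fintype.card V - 1)) ((k' - 1) / (Fintype.card V - 1)) := by
  have hv' : (1 : ℝ) < Fintype.card V := by exact_mod_cast hv
  have hk1' : 1 < k' := by
    obtain ⟨b, hb⟩ := Finset.card_pos.1 (hB.card_pos hv)
    linarith [hk b hb, hk' b hb]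
  have hblock : ∀ b ∈ B, 0 ≤ (b.card : ℝ) - 1 := fun b hb => by linarith [hk b hb]
  have hpairs := hB.sum_card_mul_card_sub_one
  constructor
  · refine sub_one_div_le_welch hk1 hv' (hB.card_pos hv) cast_sum_repl_add_one ?_ ?_
    · simpa [mul_comm] using card_nsmul_le_sum _ _ _ fun b hb => sub_le_sub_right (hk b hb) 1
    · rw [← hpairs, mul_sum]
      exact sum_le_sum fun b hb => mul_le_mul_of_nonneg_right (hk b hb) (hblock b hb)
  · refine welch_le_sub_one_div hk1' hv' cast_sum_repl_add_one ?_ ?_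
    · simpa [mul_comm] using sum_le_card_nsmul _ _ _ fun b hb => sub_le_sub_right (hk' b hb) 1
    · rw [← hpairs, mul_sum]
      exact sum_le_sum fun b hb => mul_le_mul_of_nonneg_right (hk' b hb) (hblock b hb)

end DesignBounds

/-- The matrix of Construction con1 built from a `PBD(v,K,1)` with `v ≥ 2` and
`2 ≤ K_min` is `ε`-equiangular for `ε = (K_max − K_min)/(K_min − 1)`. -/
theorem stmt_17 {V : Type*} [Fintype V] [DecidableEq V]
    (B : Finset (Finset V)) (K : Finset ℕ) (hKne : K.Nonempty)
    (hPBD : IsPBD B K) (hv : 2 ≤ Fintype.card V) (hKmin : 2 ≤ K.min' hKne)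
    (H : ∀ x : V, Matrix (Fin (repl B x + 1)) (Fin (repl B x + 1)) ℂ)
    (hH : ∀ x : V, IsComplexHadamard (H x))
    (σ : ∀ x : V, {b : Finset V // b ∈ B ∧ x ∈ b} → Fin (repl B x + 1))
    (hσinj : ∀ x : V, Function.Injective (σ x))
    (hσ0 : ∀ (x : V) (b : {b : Finset V // b ∈ B ∧ x ∈ b}), σ x b ≠ 0) :
    ∀ i j : Σ x : V, Fin (repl B x + 1), i ≠ j →
      (1 - ((K.max' hKne : ℝ) - (K.min' hKne : ℝ)) / ((K.min' hKne : ℝ) - 1)) *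
          welch B.card (∑ x : V, (repl B x + 1)) ≤ colCoh (con1 B H σ) i j ∧
      colCoh (con1 B H σ) i j ≤
        (1 + ((K.max' hKne : ℝ) - (K.min' hKne : ℝ)) / ((K.min' hKne : ℝ) - 1)) *
          welch B.card (∑ x : V, (repl B x + 1)) := by
  intro i j hij
  have hk : ∀ b ∈ B, (K.min' hKne : ℝ) ≤ b.card := fun b hb => by
    exact_mod_cast K.min'_le _ (hPBD.1 b hb)
  have hk' : ∀ b ∈ B, (b.card : ℝ) ≤ K.max' hKne := fun b hb => by
    exact_mod_cast K.le_max' _ (hPBD.1 b hb)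
  have hk1 : (1 : ℝ) < K.min' hKne := by exact_mod_cast hKmin
  have hv1 : (1 : ℝ) < Fintype.card V := by exact_mod_cast hv
  have hε : ((K.max' hKne : ℝ) - K.min' hKne) / ((K.min' hKne : ℝ) - 1)
      = ((K.max' hKne - 1) / (Fintype.card V - 1) - (K.min' hKne - 1) / (Fintype.card V - 1))
        / ((K.min' hKne - 1) / (Fintype.card V - 1)) := by
    rw [← sub_div, div_div_div_cancel_right₀ (sub_pos.2 hv1).ne', sub_sub_sub_cancel_right]
  have hα : 0 < ((K.min' hKne : ℝ) - 1) / (Fintype.card V - 1) :=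
    div_pos (sub_pos.2 hk1) (sub_pos.2 hv1)
  have hinv := hPBD.inv_repl_mem_Icc hk hk' hv
  rw [hε, colCoh_con1 hPBD hH hσinj hσ0 hij]
  exact one_sub_mul_le_and_le_one_add_mul_of_mem_Icc hα
    (sqrt_mul_mem_Icc hα.le (hinv i.1) (hinv j.1)) (hPBD.welch_mem_Icc hk hk' hk1 hv)
end

section
/- For every integer k > 3 there exists a constant C_k such that for every integer n > C_k and every real number ε with |ε| ≤ 1/(12k), there exists an n×⌊(k+ε)n⌋ complex matrix with (ℓ₁,t)-recoverability for every positive integer t ≤ √n/4. -/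
open scoped BigOperators

/-!
Take a prime `p` with `n / 2 < p ≤ n` (Bertrand) and an additive character `ψ` of `𝔽_p`. The
chirps `y ↦ ψ (a y² + b y)`, `(a, b) ∈ 𝔽_p²`, have squared norm `p`, and by Weyl differencing
any two of them have inner product of modulus at most `√p`. Keeping `⌊(k + ε) n⌋ ≤ p²` of them
as columns and padding with zero rows gives the matrix. For a kernel vector `v`, testing
`Φᴴ Φ v = 0` against each coordinate gives `p ‖v i‖ ≤ √p ‖v‖₁`, so `t < √p / 2` coordinates
carry less than half of `‖v‖₁`: this null space property yields unique `ℓ₁` recovery.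
-/

open Finset Matrix

section NullSpace

variable {m ι : Type*} [Fintype m] [Fintype ι]

def NullSpaceProperty (Φ : Matrix m ι ℂ) (t : ℕ) : Prop :=
  ∀ v : ι → ℂ, Φ *ᵥ v = 0 → v ≠ 0 → ∀ S : Finset ι, #S ≤ t →
    2 * ∑ i ∈ S, ‖v i‖ < ∑ i, ‖v i‖

theorem NullSpaceProperty.recoverable [DecidableEq ι] {Φ : Matrix m ι ℂ} {t : ℕ}
    (h : NullSpaceProperty Φ t) : Recoverable Φ t := by
  intro x hx z hz hzx
  set S := univ.filter fun i => x i ≠ 0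
  have hker : Φ *ᵥ (z - x) = 0 := by rw [mulVec_sub, hz, sub_self]
  have hnsp := h (z - x) hker (sub_ne_zero.mpr hzx) S hx
  -- off `S` we have `z = z - x`; on `S` the triangle inequality costs `2 ‖(z - x) i‖`
  have hpt : ∀ i, ‖x i‖ + ‖(z - x) i‖ ≤ ‖z i‖ + 2 * if i ∈ S then ‖(z - x) i‖ else 0 := by
    intro i
    by_cases hi : i ∈ S
    · rw [if_pos hi]
      have htri : ‖x i‖ ≤ ‖z i‖ + ‖(z - x) i‖ := by
        simpa using norm_sub_le (z i) ((z - x) i)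
      linarith
    · have hxi : x i = 0 := by simpa [S] using hi
      simp [hi, hxi]
  have hsum := sum_le_sum fun i (_ : i ∈ univ) => hpt i
  rw [sum_add_distrib, sum_add_distrib, ← mul_sum, sum_ite_mem, univ_inter] at hsum
  linarith

theorem mul_norm_le_of_mulVec_eq_zero {Φ : Matrix m ι ℂ} {c μ : ℝ} (hμ : 0 ≤ μ)
    (hdiag : ∀ i, (Φᴴ * Φ) i i = c) (hoff : ∀ i j, i ≠ j → ‖(Φᴴ * Φ) i j‖ ≤ μ)
    {v : ι → ℂ} (hv : Φ *ᵥ v = 0) (i : ι) : c * ‖v i‖ ≤ μ * ∑ j, ‖v j‖ := by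
  classical
  have hG : ((Φᴴ * Φ) *ᵥ v) i = 0 := by rw [← mulVec_mulVec, hv, mulVec_zero, Pi.zero_apply]
  rw [mulVec, dotProduct, ← add_sum_erase _ _ (mem_univ i), hdiag] at hG
  calc c * ‖v i‖ ≤ ‖(c : ℂ) * v i‖ := by
        rw [norm_mul, Complex.norm_real, Real.norm_eq_abs]
        exact mul_le_mul_of_nonneg_right (le_abs_self c) (norm_nonneg _)
    _ = ‖∑ j ∈ univ.erase i, (Φᴴ * Φ) i j * v j‖ := by
        rw [eq_neg_of_add_eq_zero_left hG, norm_neg]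
    _ ≤ ∑ j ∈ univ.erase i, μ * ‖v j‖ := by
        refine (norm_sum_le _ _).trans (sum_le_sum fun j hj => ?_)
        rw [norm_mul]
        exact mul_le_mul_of_nonneg_right (hoff i j (ne_of_mem_erase hj).symm) (norm_nonneg _)
    _ ≤ μ * ∑ j, ‖v j‖ := by
        rw [← mul_sum]
        exact mul_le_mul_of_nonneg_left
          (sum_le_sum_of_subset_of_nonneg (erase_subset _ _) fun _ _ _ => norm_nonneg _) hμ

theorem nullSpaceProperty_of_gram {Φ : Matrix m ι ℂ} {c μ : ℝ} (hμ : 0 ≤ μ)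
    (hdiag : ∀ i, (Φᴴ * Φ) i i = c) (hoff : ∀ i j, i ≠ j → ‖(Φᴴ * Φ) i j‖ ≤ μ)
    {t : ℕ} (ht : 2 * t * μ < c) : NullSpaceProperty Φ t := by
  intro v hv hv0 S hS
  obtain ⟨i, hi⟩ := Function.ne_iff.mp hv0
  have hT : 0 < ∑ j, ‖v j‖ :=
    (norm_pos_iff.mpr hi).trans_le (single_le_sum (fun j _ => norm_nonneg (v j)) (mem_univ i))
  have hS : c * ∑ j ∈ S, ‖v j‖ ≤ t * (μ * ∑ j, ‖v j‖) :=
    calc c * ∑ j ∈ S, ‖v j‖ ≤ ∑ _j ∈ S, μ * ∑ j, ‖v j‖ := by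
          rw [mul_sum]
          exact sum_le_sum fun j _ => mul_norm_le_of_mulVec_eq_zero hμ hdiag hoff hv j
      _ ≤ t * (μ * ∑ j, ‖v j‖) := by
          rw [sum_const, nsmul_eq_mul]
          exact mul_le_mul_of_nonneg_right (by exact_mod_cast hS) (by positivity)
  have hc : 0 < c := lt_of_le_of_lt (by positivity) ht
  nlinarith

end NullSpace

section Chirp

variable {F : Type*} [Field F] [Fintype F] {ψ : AddChar F ℂ}

/-- Weyl differencing: `|S|² = ∑_h ψ(A h² + B h) ∑_z ψ(2 A h z)`, and the inner sum vanishes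
unless `h = 0`. -/
theorem norm_sq_sum_addChar_quadratic (hψ : ψ.IsPrimitive) (hF : ringChar F ≠ 2) {A : F}
    (hA : A ≠ 0) (B : F) :
    ‖∑ y, ψ (A * y ^ 2 + B * y)‖ ^ 2 = Fintype.card F := by
  classical
  set f : F → F := fun y => A * y ^ 2 + B * y
  have hdiff : ∀ z h, f (z + h) - f z = f h + z * (2 * A * h) := fun z h => by
    simp only [f]; ring
  have h2Ah : ∀ h : F, 2 * A * h = 0 ↔ h = 0 := fun h => by
    simp [Ring.two_ne_zero hF, hA]
  suffices (‖∑ y, ψ (f y)‖ ^ 2 : ℂ) = Fintype.card F by exact_mod_cast this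
  calc (‖∑ y, ψ (f y)‖ ^ 2 : ℂ)
      = ∑ z, ∑ y, ψ (f y - f z) := by
        rw [← Complex.conj_mul', map_sum, sum_mul]
        simp_rw [mul_sum, ← AddChar.map_neg_eq_conj, ← AddChar.map_add_eq_mul, neg_add_eq_sub]
    _ = ∑ z, ∑ h, ψ (f h) * ψ (z * (2 * A * h)) := by
        refine sum_congr rfl fun z _ => ?_
        refine (Fintype.sum_equiv (Equiv.addLeft z) _ _ fun h => ?_).symm
        simp only [Equiv.coe_addLeft, hdiff, AddChar.map_add_eq_mul]
    _ = ∑ h, ψ (f h) * ∑ z, ψ (z * (2 * A * h)) := by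
        rw [sum_comm]
        simp_rw [mul_sum]
    _ = Fintype.card F := by
        simp_rw [AddChar.sum_mulShift _ hψ]
        simp [h2Ah, f, apply_ite (Nat.cast : ℕ → ℂ)]

theorem norm_sum_addChar_quadratic_le (hψ : ψ.IsPrimitive) (hF : ringChar F ≠ 2) {c : F × F}
    (hc : c ≠ 0) : ‖∑ y, ψ (c.1 * y ^ 2 + c.2 * y)‖ ≤ √(Fintype.card F) := by
  classical
  rcases eq_or_ne c.1 0 with hA | hA
  · have hB : c.2 ≠ 0 := fun hB => hc (Prod.ext hA hB)
    simp only [hA, zero_mul, zero_add, mul_comm c.2]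
    rw [AddChar.sum_mulShift _ hψ, if_neg hB, Nat.cast_zero, norm_zero]
    positivity
  · rw [← Real.sqrt_sq (norm_nonneg _), norm_sq_sum_addChar_quadratic hψ hF hA]

variable (ψ) in
noncomputable def chirpMatrix : Matrix F (F × F) ℂ :=
  Matrix.of fun y c => ψ (c.1 * y ^ 2 + c.2 * y)

theorem chirpMatrix_gram (c c' : F × F) :
    ((chirpMatrix ψ)ᴴ * chirpMatrix ψ) c c' = ∑ y, ψ ((c' - c).1 * y ^ 2 + (c' - c).2 * y) := by
  rw [mul_apply]
  refine sum_congr rfl fun y _ => ?_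
  rw [conjTranspose_apply, chirpMatrix, of_apply, of_apply, ← starRingEnd_apply,
    ← AddChar.map_neg_eq_conj, ← AddChar.map_add_eq_mul, Prod.fst_sub, Prod.snd_sub]
  ring_nf

theorem nullSpaceProperty_chirpMatrix_submatrix (hψ : ψ.IsPrimitive) (hF : ringChar F ≠ 2)
    {ι : Type*} [Fintype ι] {col : ι → F × F} (hcol : Function.Injective col) {t : ℕ}
    (ht : 2 * t * √(Fintype.card F) < Fintype.card F) :
    NullSpaceProperty ((chirpMatrix ψ).submatrix id col) t := by
  have hgram (i j : ι) :
      (((chirpMatrix ψ).submatrix id col)ᴴ * (chirpMatrix ψ).submatrix id col) i j =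
        ∑ y, ψ ((col j - col i).1 * y ^ 2 + (col j - col i).2 * y) :=
    chirpMatrix_gram (col i) (col j)
  refine nullSpaceProperty_of_gram (Real.sqrt_nonneg _) (fun i => ?_) (fun i j hij => ?_) ht
  · rw [hgram, sub_self]
    simp
  · rw [hgram]
    exact norm_sum_addChar_quadratic_le hψ hF (sub_ne_zero.mpr (hcol.ne hij.symm))

end Chirp

theorem Recoverable.mul_of_mul_eq_one {m m' ι : Type*} [Fintype m] [DecidableEq m] [Fintype m']
    [Fintype ι] [DecidableEq ι] {Φ : Matrix m ι ℂ} {A : Matrix m m' ℂ} {B : Matrix m' m ℂ}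
    (hAB : A * B = 1) {t : ℕ} (h : Recoverable Φ t) : Recoverable (B * Φ) t := by
  intro x hx z hz
  refine h x hx z ?_
  simpa only [mulVec_mulVec, ← Matrix.mul_assoc, hAB, Matrix.one_mul] using congrArg (A *ᵥ ·) hz

theorem floor_add_mul_le_mul_self {k n p : ℕ} {ε : ℝ} (hε : ε ≤ 1) (hn : 4 * (k + 1) < n)
    (hnp : n < 2 * p) : ⌊((k : ℝ) + ε) * n⌋₊ ≤ p * p := by
  have hn' : 4 * ((k : ℝ) + 1) ≤ n := by exact_mod_cast hn.le
  have hnp' : (n : ℝ) ≤ 2 * p := by exact_mod_cast hnp.le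
  refine Nat.floor_le_of_le ?_
  push_cast
  nlinarith [(n.cast_nonneg : (0 : ℝ) ≤ n)]

theorem two_mul_mul_sqrt_lt {n p t : ℕ} (hp : 0 < p) (hnp : n < 2 * p)
    (ht : (t : ℝ) ≤ √n / 4) : 2 * t * √p < p := by
  have hp' : (0 : ℝ) < p := by exact_mod_cast hp
  have hsqrt : √n < 2 * √p := by
    rw [Real.sqrt_lt' (by positivity), mul_pow, Real.sq_sqrt hp'.le]
    have : (n : ℝ) < 2 * p := by exact_mod_cast hnp
    linarith
  nlinarith [Real.mul_self_sqrt hp'.le, Real.sqrt_pos.mpr hp']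

theorem stmt_19_general (k : ℕ) :
    ∃ C : ℕ, ∀ n : ℕ, C < n → ∀ ε : ℝ, |ε| ≤ 1 / (12 * (k : ℝ)) →
      ∃ Φ : Matrix (Fin n) (Fin ⌊((k : ℝ) + ε) * (n : ℝ)⌋₊) ℂ,
        ∀ t : ℕ, 0 < t → (t : ℝ) ≤ Real.sqrt n / 4 → Recoverable Φ t := by
  refine ⟨4 * (k + 1), fun n hn ε hε => ?_⟩
  have hε1 : ε ≤ 1 := by
    refine (le_abs_self ε).trans (hε.trans ?_)
    rcases k.eq_zero_or_pos with rfl | hk0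
    · simp
    · rw [div_le_one (by positivity)]
      have : (1 : ℝ) ≤ k := by exact_mod_cast hk0
      linarith
  obtain ⟨p, hp, hnp, hpn⟩ := Nat.exists_prime_lt_and_le_two_mul (n / 2) (by omega)
  have : Fact p.Prime := ⟨hp⟩
  have hchar : ringChar (ZMod p) ≠ 2 := by rw [ZMod.ringChar_zmod_n]; omega
  obtain ⟨col⟩ : Nonempty (Fin ⌊((k : ℝ) + ε) * n⌋₊ ↪ ZMod p × ZMod p) :=
    Function.Embedding.nonempty_of_card_le <| by
      simpa [ZMod.card] using floor_add_mul_le_mul_self hε1 hn (by omega : n < 2 * p)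
  obtain ⟨row⟩ : Nonempty (ZMod p ↪ Fin n) :=
    Function.Embedding.nonempty_of_card_le <| by simp only [ZMod.card, Fintype.card_fin]; omega
  have hrow : (1 : Matrix (Fin n) (Fin n) ℂ).submatrix row id *
      (1 : Matrix (Fin n) (Fin n) ℂ).submatrix id row = 1 := by
    rw [← submatrix_mul _ _ _ _ _ Function.bijective_id, Matrix.one_mul, submatrix_one_embedding]
  refine ⟨(1 : Matrix (Fin n) (Fin n) ℂ).submatrix id row *
    (chirpMatrix (ZMod.stdAddChar (N := p))).submatrix id col, fun t _ ht => ?_⟩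
  refine Recoverable.mul_of_mul_eq_one hrow ?_
  refine (nullSpaceProperty_chirpMatrix_submatrix (ZMod.isPrimitive_stdAddChar p) hchar
    col.injective ?_).recoverable
  simpa [ZMod.card] using two_mul_mul_sqrt_lt hp.pos (by omega) ht

/-- For every integer `k > 3` there is a constant `C_k` such that for every
`n > C_k` and every real `ε` with `|ε| ≤ 1/(12k)`, there exists an
`n × ⌊(k+ε)n⌋` complex matrix with `(ℓ₁,t)`-recoverability for every positive
integer `t ≤ √n/4`. -/
theorem stmt_19 (k : ℕ) (hk : 3 < k) :
    ∃ C : ℕ, ∀ n : ℕ, C < n → ∀ ε : ℝ, |ε| ≤ 1 / (12 * (k : ℝ)) →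
      ∃ Φ : Matrix (Fin n) (Fin ⌊((k : ℝ) + ε) * (n : ℝ)⌋₊) ℂ,
        ∀ t : ℕ, 0 < t → (t : ℝ) ≤ Real.sqrt n / 4 → Recoverable Φ t :=
  stmt_19_general k
end
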